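/- Let K be a finite extension of Q_p with maximal ideal P, uniformizer π, and normalized valuation v_P. Let f(x) = x^n + f_{n−1}x^{n−1} + ... + f_0 and g(x) = x^n + g_{n−1}x^{n−1} + ... + g_0 be Eisenstein polynomials over K, let α be a root of f and β a root of g. Set w = min_{0 ≤ i ≤ n−1} ( v_P(g_i − f_i) + i/n ). Then |g(α)| = |π|^w, where v_P is extended to K(α) so that v_P(α) = 1/n. -/

import Mathlib

open Polynomial

/-- An additive valuation `v` (written additively, with `v 0 = ⊤`) on a field `Ω`,
extending the `p`-adic valuation of `ℚ_[p]` (scaled by the ramification index `e`),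
taking integer values on an intermediate field `K` and normalized so that a
uniformizer `unif` of `K` has valuation `1`. -/
structure PadicSetup (p : ℕ) [Fact p.Prime] (K Ω : Type*) [Field K] [Field Ω]
    [Algebra ℚ_[p] K] [Algebra ℚ_[p] Ω] [Algebra K Ω] [IsScalarTower ℚ_[p] K Ω] where
  v : Ω → WithTop ℚ
  v_top_iff : ∀ x : Ω, v x = ⊤ ↔ x = 0
  v_mul : ∀ x y : Ω, v (x * y) = v x + v y
  v_add : ∀ x y : Ω, min (v x) (v y) ≤ v (x + y)
  e : ℕ
  e_pos : 0 < e
  v_padic : ∀ x : ℚ_[p], x ≠ 0 →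
    v (algebraMap ℚ_[p] Ω x) = (((e : ℤ) * x.valuation : ℤ) : ℚ)
  v_int : ∀ x : K, x ≠ 0 → ∃ m : ℤ, v (algebraMap K Ω x) = ((m : ℚ) : WithTop ℚ)
  unif : K
  v_unif : v (algebraMap K Ω unif) = 1

variable {p : ℕ} [Fact p.Prime] {K Ω : Type*} [Field K] [Field Ω]
    [Algebra ℚ_[p] K] [Algebra ℚ_[p] Ω] [Algebra K Ω] [IsScalarTower ℚ_[p] K Ω]

/-- `f` is an Eisenstein polynomial of degree `n` over `K` (with respect to the
normalized valuation of `K`): monic of degree `n`, all lower coefficients have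
valuation at least `1`, and the constant coefficient has valuation exactly `1`. -/
def PadicSetup.IsEisensteinOfDegree (S : PadicSetup p K Ω) (f : K[X]) (n : ℕ) : Prop :=
  f.Monic ∧ f.natDegree = n ∧ (∀ i < n, 1 ≤ S.v (algebraMap K Ω (f.coeff i))) ∧
    S.v (algebraMap K Ω (f.coeff 0)) = 1

/-- The `i`-th coefficient of the ramification polynomial `ρ(x) = f(αx+α)/αⁿ` of `f`,
namely `ρ_i = ∑_{k=i}^n C(k,i) f_k α^{k-n}`. -/
noncomputable def PadicSetup.rho (S : PadicSetup p K Ω) (f : K[X]) (n : ℕ) (α : Ω)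
    (i : ℕ) : Ω :=
  ∑ k ∈ Finset.Icc i n, (k.choose i : Ω) * algebraMap K Ω (f.coeff k) * α ^ ((k : ℤ) - (n : ℤ))

/-! The root `α` has valuation `1/n`, read off the Newton polygon of the Eisenstein polynomial `f`.
Hence `g(α) = g(α) - f(α) = ∑_{i<n} (g_i - f_i) αⁱ` is a sum of terms of valuations
`v(g_i - f_i) + i/n`. As `v(g_i - f_i)` is an integer, the fractional part of such a value is
`i/n`, so no two nonzero terms have the same valuation and the ultrametric inequality for the
sum is an equality. -/

open Finset

namespace AddValuation

variable {R : Type*} [Ring R] {Γ₀ : Type*} [LinearOrderedAddCommMonoidWithTop Γ₀]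
  (v : AddValuation R Γ₀)

theorem map_sum_eq_of_lt {ι : Type*} [DecidableEq ι] {s : Finset ι} {f : ι → R} {j : ι}
    (hj : j ∈ s) (hf : ∀ i ∈ s \ {j}, v (f j) < v (f i)) :
    v (∑ i ∈ s, f i) = v (f j) := by
  rw [sum_eq_add_sum_sdiff_singleton_of_mem hj]
  rcases eq_or_ne (v (f j)) ⊤ with h0 | h0
  · have hempty : s \ {j} = ∅ :=
      eq_empty_of_forall_notMem fun i hi => not_top_lt (h0 ▸ hf i hi)
    rw [hempty, sum_empty, add_zero]
  · exact v.map_add_eq_of_lt_left (v.map_lt_sum h0 hf)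

theorem sum_ne_zero_of_lt {ι : Type*} [DecidableEq ι] {s : Finset ι} {f : ι → R} {j : ι}
    (hj : j ∈ s) (hj_top : v (f j) ≠ ⊤) (hf : ∀ i ∈ s \ {j}, v (f j) < v (f i)) :
    ∑ i ∈ s, f i ≠ 0 := fun h =>
  hj_top (by rw [← v.map_sum_eq_of_lt hj hf, h, map_zero])

theorem map_sum_eq_inf {ι : Type*} {s : Finset ι} {f : ι → R}
    (hf : ∀ i ∈ s, ∀ j ∈ s, v (f i) = v (f j) → v (f i) ≠ ⊤ → i = j) :
    v (∑ i ∈ s, f i) = s.inf fun i => v (f i) := by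
  induction s using Finset.cons_induction with
  | empty => simp
  | cons a s ha ih =>
    have ih := ih fun i hi j hj => hf i (mem_cons_of_mem hi) j (mem_cons_of_mem hj)
    rw [sum_cons, inf_cons, ← ih]
    by_cases heq : v (f a) = v (∑ i ∈ s, f i)
    · have htop : v (f a) = ⊤ := by
        rcases s.eq_empty_or_nonempty with rfl | hs
        · simpa using heq
        obtain ⟨j, hj, hjeq⟩ := s.exists_mem_eq_inf hs fun i => v (f i)
        by_contra hne
        have haj : a = j :=
          hf a (mem_cons_self a s) j (mem_cons_of_mem hj) (heq.trans (ih.trans hjeq)) hne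
        exact ha (haj ▸ hj)
      have hle := v.map_add (f a) (∑ i ∈ s, f i)
      rw [← heq, htop, min_self] at hle ⊢
      exact top_unique hle
    · exact v.map_add_of_distinct_val heq

end AddValuation

/-- The Newton polygon argument: for any other value of `v α` a single term of `f(α) = 0` would
strictly dominate all the others. -/
theorem AddValuation.map_root_of_eisenstein {R A : Type*} [CommRing R] [CommRing A] [Algebra R A]
    (v : AddValuation A (WithTop ℚ)) {f : R[X]} {n : ℕ} (hn : 0 < n) (hf : f.IsMonicOfDegree n)
    (hcoeff : ∀ i < n, 1 ≤ v (algebraMap R A (f.coeff i)))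
    (hcoeff0 : v (algebraMap R A (f.coeff 0)) = 1) {α : A} (hα : aeval α f = 0) :
    v α = ((1 / n : ℚ) : WithTop ℚ) := by
  set x : ℕ → A := fun i => algebraMap R A (f.coeff i) * α ^ i with hx
  have hsum : ∑ i ∈ range (n + 1), x i = 0 := by
    rw [← hα, aeval_eq_sum_range, hf.natDegree_eq]
    simp only [hx, Algebra.smul_def]
  have hx0 : v (x 0) = 1 := by simp [hx, hcoeff0]
  have hmem0 : 0 ∈ range (n + 1) := mem_range.2 n.succ_pos
  have hmemn : n ∈ range (n + 1) := self_mem_range_succ n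
  by_cases htop : v α = ⊤
  · refine absurd hsum (v.sum_ne_zero_of_lt hmem0 (by simp [hx0]) fun i hi => ?_)
    have hi0 : i ≠ 0 := by simpa using (mem_sdiff.1 hi).2
    obtain ⟨k, rfl⟩ := Nat.exists_eq_add_one_of_ne_zero hi0
    rw [hx0, hx]
    dsimp only
    rw [pow_succ, v.map_mul, v.map_mul, htop, add_top, add_top]
    exact WithTop.coe_lt_top 1
  lift v α to ℚ using htop with t ht
  have hxn : v (x n) = ((n * t : ℚ) : WithTop ℚ) := by
    have hcn : f.coeff n = 1 := hf.natDegree_eq ▸ hf.monic.coeff_natDegree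
    rw [hx, v.map_mul, v.map_pow, hcn, (algebraMap R A).map_one, v.map_one, zero_add, ← ht,
      ← WithTop.coe_nsmul, nsmul_eq_mul]
  have hxi : ∀ i < n, ((1 + i * t : ℚ) : WithTop ℚ) ≤ v (x i) := fun i hi => by
    rw [hx, v.map_mul, v.map_pow, ← ht, ← WithTop.coe_nsmul, nsmul_eq_mul, WithTop.coe_add,
      WithTop.coe_one]
    exact add_le_add_left (hcoeff i hi) _
  have hnQ : (0 : ℚ) < n := by exact_mod_cast hn
  rcases lt_trichotomy ((n : ℚ) * t) 1 with hlt | heq | hgt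
  · refine absurd hsum (v.sum_ne_zero_of_lt hmemn (hxn ▸ WithTop.coe_ne_top) fun i hi => ?_)
    have hin : i < n := by
      obtain ⟨hi, hin⟩ := mem_sdiff.1 hi
      have := mem_range.1 hi
      simp only [mem_singleton] at hin
      omega
    refine lt_of_lt_of_le ?_ (hxi i hin)
    rw [hxn, WithTop.coe_lt_coe]
    have hin' : (i : ℚ) < n := by exact_mod_cast hin
    -- for `t < 0` already `n * t ≤ i * t`
    rcases le_or_gt 0 t with ht0 | ht0 <;> nlinarith
  · rw [WithTop.coe_eq_coe, eq_div_iff hnQ.ne']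
    linarith
  · refine absurd hsum (v.sum_ne_zero_of_lt hmem0 (by simp [hx0]) fun i hi => ?_)
    obtain ⟨hi, hi0⟩ := mem_sdiff.1 hi
    have hi0 : 0 < i := by simpa [Nat.pos_iff_ne_zero] using hi0
    rcases (Nat.lt_succ_iff.1 (mem_range.1 hi)).lt_or_eq with hin | rfl
    · refine lt_of_lt_of_le ?_ (hxi i hin)
      rw [hx0, ← WithTop.coe_one, WithTop.coe_lt_coe]
      have ht0 : 0 < t := by nlinarith
      have hi0' : (0 : ℚ) < i := by exact_mod_cast hi0
      nlinarith
    · rw [hx0, hxn, ← WithTop.coe_one, WithTop.coe_lt_coe]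
      exact hgt

theorem Polynomial.IsMonicOfDegree.aeval_eq_sum_range_sub {R A : Type*} [CommRing R]
    [CommRing A] [Algebra R A] {f g : R[X]} {n : ℕ} (hn : n ≠ 0) (hf : f.IsMonicOfDegree n)
    (hg : g.IsMonicOfDegree n) {α : A} (hα : aeval α f = 0) :
    aeval α g = ∑ i ∈ range n, algebraMap R A (g.coeff i - f.coeff i) * α ^ i := by
  have hsub : aeval α g = aeval α (g - f) := by rw [_root_.map_sub, hα, sub_zero]
  rw [hsub, aeval_eq_sum_range' (hg.natDegree_sub_lt hn hf : (g - f).natDegree < n)]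
  simp only [coeff_sub, Algebra.smul_def]

theorem eq_of_intCast_add_div_eq {m m' : ℤ} {i j n : ℕ} (hi : i < n) (hj : j < n)
    (h : (m : ℚ) + i / n = m' + j / n) : i = j := by
  have hn : (0 : ℚ) < n := by exact_mod_cast hi.pos
  have hfract : ∀ (m : ℤ) (k : ℕ), k < n → Int.fract ((m : ℚ) + k / n) = k / n := by
    intro m k hk
    rw [Int.fract_intCast_add, Int.fract_eq_self, div_lt_one hn]
    exact ⟨by positivity, by exact_mod_cast hk⟩
  have h := congrArg Int.fract h
  rw [hfract m i hi, hfract m' j hj, div_left_inj' hn.ne'] at h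
  exact_mod_cast h

namespace PadicSetup

variable (S : PadicSetup p K Ω)

theorem v_one : S.v 1 = 0 := by
  have h := S.v_mul 1 1
  rw [one_mul] at h
  lift S.v 1 to ℚ using fun h' => one_ne_zero ((S.v_top_iff 1).1 h') with t
  norm_cast at h ⊢
  linarith

def toAddValuation : AddValuation Ω (WithTop ℚ) :=
  AddValuation.of S.v ((S.v_top_iff 0).2 rfl) S.v_one S.v_add S.v_mul

@[simp]
theorem toAddValuation_apply (x : Ω) : S.toAddValuation x = S.v x := rfl

theorem exists_intCast_of_ne_top {x : K} (hx : S.v (algebraMap K Ω x) ≠ ⊤) :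
    ∃ m : ℤ, S.v (algebraMap K Ω x) = ((m : ℚ) : WithTop ℚ) :=
  S.v_int x fun h => hx ((S.v_top_iff _).2 (by rw [h, map_zero]))

end PadicSetup

theorem dist_formula_for_eisenstein_general
    (S : PadicSetup p K Ω)
    (f g : K[X]) (n : ℕ) (hn : 0 < n)
    (hf : S.IsEisensteinOfDegree f n) (hg : S.IsEisensteinOfDegree g n)
    (α : Ω) (hα : aeval α f = 0) :
    S.v (aeval α g) =
      (Finset.range n).inf (fun i =>
        S.v (algebraMap K Ω (g.coeff i - f.coeff i)) + (((i : ℚ) / (n : ℚ) : ℚ) : WithTop ℚ)) := by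
  have hf' : f.IsMonicOfDegree n := ⟨hf.2.1, hf.1⟩
  have hg' : g.IsMonicOfDegree n := ⟨hg.2.1, hg.1⟩
  have hvα : S.toAddValuation α = ((1 / n : ℚ) : WithTop ℚ) :=
    S.toAddValuation.map_root_of_eisenstein hn hf' hf.2.2.1 hf.2.2.2 hα
  have hterm : ∀ i, S.toAddValuation (algebraMap K Ω (g.coeff i - f.coeff i) * α ^ i) =
      S.v (algebraMap K Ω (g.coeff i - f.coeff i)) + ((i / n : ℚ) : WithTop ℚ) := fun i => by
    rw [AddValuation.map_mul, AddValuation.map_pow, hvα, ← WithTop.coe_nsmul, nsmul_eq_mul,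
      mul_one_div]
    rfl
  rw [← S.toAddValuation_apply, hf'.aeval_eq_sum_range_sub hn.ne' hg' hα,
    AddValuation.map_sum_eq_inf]
  · simp only [hterm]
  · intro i hi j hj heq hfin
    rw [hterm, hterm] at heq
    rw [hterm] at hfin
    obtain ⟨m, hm⟩ := S.exists_intCast_of_ne_top (WithTop.add_ne_top.1 hfin).1
    obtain ⟨m', hm'⟩ := S.exists_intCast_of_ne_top (WithTop.add_ne_top.1 (heq ▸ hfin)).1
    rw [hm, hm'] at heq
    norm_cast at heq
    exact eq_of_intCast_add_div_eq (mem_range.1 hi) (mem_range.1 hj) heq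

/-- For Eisenstein polynomials `f, g` of degree `n` over `K` and a root
`α` of `f`, setting `w = min_{0 ≤ i ≤ n-1} ( v_P(g_i - f_i) + i/n )` one has
`v(g(α)) = w` (multiplicatively, `|g(α)| = |π|^w`). -/
theorem dist_formula_for_eisenstein
    [FiniteDimensional ℚ_[p] K] [IsAlgClosed Ω] [Algebra.IsAlgebraic K Ω]
    (S : PadicSetup p K Ω)
    (f g : K[X]) (n : ℕ) (hn : 0 < n)
    (hf : S.IsEisensteinOfDegree f n) (hg : S.IsEisensteinOfDegree g n)
    (α : Ω) (hα : aeval α f = 0) :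
    S.v (aeval α g) =
      (Finset.range n).inf (fun i =>
        S.v (algebraMap K Ω (g.coeff i - f.coeff i)) + (((i : ℚ) / (n : ℚ) : ℚ) : WithTop ℚ)) :=
  dist_formula_for_eisenstein_general S f g n hn hf hg α hα
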